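/- arXiv:1912.02428 — 2 statements merged into one kernel-verified Lean document; each statement's English description precedes it below -/
import Mathlib

section
/- Let g : (0,∞) → [0,∞) be a measurable function with ∫₀^∞ g(r)/r² dr < ∞. Then liminf_{r→0⁺} g(r)/r = 0 and liminf_{r→+∞} g(r)/r = 0. -/
open MeasureTheory Metric Filter

noncomputable section

/-- Radial derivative ∂_r f(x) = (x/|x|)·∇f(x). -/
def radialDeriv {d : ℕ} (f : EuclideanSpace ℝ (Fin d) → ℝ) (x : EuclideanSpace ℝ (Fin d)) : ℝ :=
  (inner ℝ ((‖x‖⁻¹ : ℝ) • x) (gradient f x) : ℝ)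

/-- Angular part of the gradient: ∇̸f = ∇f − (∂_r f)(x/|x|). -/
def angGrad {d : ℕ} (f : EuclideanSpace ℝ (Fin d) → ℝ) (x : EuclideanSpace ℝ (Fin d)) :
    EuclideanSpace ℝ (Fin d) :=
  gradient f x - radialDeriv f x • ((‖x‖⁻¹ : ℝ) • x)

/-- Laplacian as the sum of second derivatives along coordinate directions. -/
def lap {d : ℕ} (f : EuclideanSpace ℝ (Fin d) → ℝ) (x : EuclideanSpace ℝ (Fin d)) : ℝ :=
  ∑ i, fderiv ℝ (fun y => fderiv ℝ f y (EuclideanSpace.single i 1)) x (EuclideanSpace.single i 1)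

/-- λ_d = (d−1)(d−3)/4. -/
def lam (d : ℕ) : ℝ := ((d : ℝ) - 1) * ((d : ℝ) - 3) / 4

/-- Assumption (A1) on the pair (d,p). -/
def A1 (d : ℕ) (p : ℝ) : Prop :=
  (3 ≤ d ∧ d ≤ 6 ∧ 1 + 4 / ((d : ℝ) - 1) ≤ p ∧ p < 1 + 4 / ((d : ℝ) - 2)) ∨
  (7 ≤ d ∧ d ≤ 9 ∧ 1 + 4 / ((d : ℝ) - 1) ≤ p ∧ p ≤ 1 + 3 / ((d : ℝ) - 3))

/-- A classical solution of the defocusing wave equation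
`∂_t² u = Δu − |u|^{p−1}u`, smooth and supported in `{|x| ≤ R₀ + |t|}`. -/
def IsClassicalSolution (d : ℕ) (p : ℝ) (u : EuclideanSpace ℝ (Fin d) → ℝ → ℝ) : Prop :=
  ContDiff ℝ (⊤ : ℕ∞) (fun q : EuclideanSpace ℝ (Fin d) × ℝ => u q.1 q.2) ∧
  (∀ x t, deriv (deriv (u x)) t = lap (fun y => u y t) x - |u x t| ^ (p - 1) * u x t) ∧
  ∃ R₀ > 0, ∀ (x : EuclideanSpace ℝ (Fin d)) (t : ℝ), R₀ + |t| ≤ ‖x‖ → u x t = 0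

/-- Conserved energy of a solution (computed at time 0). -/
def energy (d : ℕ) (p : ℝ) (u : EuclideanSpace ℝ (Fin d) → ℝ → ℝ) : ℝ :=
  ∫ x, ((1/2) * ‖gradient (fun y => u y 0) x‖^2 + (1/2) * (deriv (u x) 0)^2
    + (1/(p+1)) * |u x 0| ^ (p+1))

/-- L₊u = ∂_r u + ((d−1)/2)u/|x| + ∂_t u. -/
def Lplus {d : ℕ} (u : EuclideanSpace ℝ (Fin d) → ℝ → ℝ)
    (x : EuclideanSpace ℝ (Fin d)) (t : ℝ) : ℝ :=
  radialDeriv (fun y => u y t) x + ((d : ℝ) - 1) / 2 * u x t / ‖x‖ + deriv (u x) t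

/-- L₋u = ∂_r u + ((d−1)/2)u/|x| − ∂_t u. -/
def Lminus {d : ℕ} (u : EuclideanSpace ℝ (Fin d) → ℝ → ℝ)
    (x : EuclideanSpace ℝ (Fin d)) (t : ℝ) : ℝ :=
  radialDeriv (fun y => u y t) x + ((d : ℝ) - 1) / 2 * u x t / ‖x‖ - deriv (u x) t

/-- The non-directional energy density e′(x,t). -/
def ePrime {d : ℕ} (p : ℝ) (u : EuclideanSpace ℝ (Fin d) → ℝ → ℝ)
    (x : EuclideanSpace ℝ (Fin d)) (t : ℝ) : ℝ :=
  (1/2) * ‖angGrad (fun y => u y t) x‖^2 + lam d / 2 * (u x t)^2 / ‖x‖^2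
    + (1/(p+1)) * |u x t| ^ (p+1)

/-- The inward energy E_−(t). -/
def eMinus {d : ℕ} (p : ℝ) (u : EuclideanSpace ℝ (Fin d) → ℝ → ℝ) (t : ℝ) : ℝ :=
  ∫ x, ((1/4) * (Lplus u x t)^2 + lam d / 4 * (u x t)^2 / ‖x‖^2
    + (1/4) * ‖angGrad (fun y => u y t) x‖^2 + (1/(2*(p+1))) * |u x t| ^ (p+1))

/-- The outward energy E₊(t). -/
def ePlus {d : ℕ} (p : ℝ) (u : EuclideanSpace ℝ (Fin d) → ℝ → ℝ) (t : ℝ) : ℝ :=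
  ∫ x, ((1/4) * (Lminus u x t)^2 + lam d / 4 * (u x t)^2 / ‖x‖^2
    + (1/4) * ‖angGrad (fun y => u y t) x‖^2 + (1/(2*(p+1))) * |u x t| ^ (p+1))

/-- The Morawetz density M(x,t). -/
def mor {d : ℕ} (p : ℝ) (u : EuclideanSpace ℝ (Fin d) → ℝ → ℝ)
    (x : EuclideanSpace ℝ (Fin d)) (t : ℝ) : ℝ :=
  (1/2) * ‖angGrad (fun y => u y t) x‖^2 / ‖x‖ + lam d / 2 * (u x t)^2 / ‖x‖^3
    + ((d : ℝ) - 1) * (p - 1) / (4 * (p + 1)) * (|u x t| ^ (p+1) / ‖x‖)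

/-- c_d = ((d−1)²/16)·σ(𝕊^{d−1}). -/
def cConst (d : ℕ) : ℝ :=
  (((d : ℝ) - 1)^2 / 16) *
    (μH[(d : ℝ) - 1] (sphere (0 : EuclideanSpace ℝ (Fin d)) 1)).toReal

lemma aux_liminf_zero {l : Filter ℝ} [l.NeBot] {u : ℝ → ℝ}
    (h0 : ∀ᶠ r in l, 0 ≤ u r) (hfreq : ∀ ε : ℝ, 0 < ε → ∃ᶠ r in l, u r < ε) :
    Filter.liminf u l = 0 := by
  have hb : IsBoundedUnder (· ≥ ·) l u := ⟨0, by simpa using h0⟩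
  have hcob : IsCoboundedUnder (· ≥ ·) l u :=
    Filter.IsCoboundedUnder.of_frequently_le ((hfreq 1 one_pos).mono fun r h => h.le)
  refine le_antisymm ?_ (Filter.le_liminf_of_le hcob h0)
  refine le_of_forall_pos_le_add fun ε hε => ?_
  have := Filter.liminf_le_of_frequently_le ((hfreq ε hε).mono fun r h => h.le) hb
  linarith

lemma aux_not_ev {g : ℝ → ℝ} (hmeas : Measurable g)
    (hint : IntegrableOn (fun r => g r / r ^ 2) (Set.Ioi (0 : ℝ)))
    {ε : ℝ} (hε : 0 < ε) {s : Set ℝ} (hs : MeasurableSet s)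
    (hni : ¬ IntegrableOn (fun r => r⁻¹) s) (hsub : s ⊆ Set.Ioi (0 : ℝ))
    (hbig : ∀ r ∈ s, ε ≤ g r / r) : False := by
  apply hni
  have h1 : IntegrableOn (fun r => g r / r ^ 2) s := hint.mono_set hsub
  have h2 : IntegrableOn (fun r => ε * r⁻¹) s := by
    refine h1.mono' ((measurable_const.mul measurable_inv).aestronglyMeasurable) ?_
    filter_upwards [ae_restrict_mem hs] with r hr
    have hr0 : 0 < r := hsub hr
    have : ε * r⁻¹ ≤ g r / r ^ 2 := by
      rw [div_eq_mul_inv, sq, mul_inv]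
      have := hbig r hr
      rw [div_eq_mul_inv] at this
      calc ε * r⁻¹ ≤ (g r * r⁻¹) * r⁻¹ := by
            exact mul_le_mul_of_nonneg_right this (inv_nonneg.2 hr0.le)
        _ = g r * (r⁻¹ * r⁻¹) := by ring
    rw [Real.norm_eq_abs, abs_of_nonneg (by positivity)]
    exact this
  have := h2.const_mul ε⁻¹
  simp [← mul_assoc, inv_mul_cancel₀ hε.ne'] at this
  exact this

/-- if ∫₀^∞ g(r)/r² dr < ∞ for a nonnegative measurable g, then
liminf_{r→0⁺} g(r)/r = 0 and liminf_{r→∞} g(r)/r = 0. -/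
theorem stmt3 (g : ℝ → ℝ) (hmeas : Measurable g)
    (hpos : ∀ r ∈ Set.Ioi (0 : ℝ), 0 ≤ g r)
    (hint : IntegrableOn (fun r => g r / r^2) (Set.Ioi (0 : ℝ))) :
    Filter.liminf (fun r => g r / r) (nhdsWithin 0 (Set.Ioi (0 : ℝ))) = 0 ∧
    Filter.liminf (fun r => g r / r) Filter.atTop = 0 := by
  constructor
  · apply aux_liminf_zero
    · filter_upwards [self_mem_nhdsWithin] with r hr
      exact div_nonneg (hpos r hr) (le_of_lt hr)
    · intro ε hε
      by_contra hc
      rw [Filter.not_frequently] at hc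
      simp only [not_lt] at hc
      rw [Filter.eventually_iff, Metric.mem_nhdsWithin_iff] at hc
      obtain ⟨δ, hδ, hsub⟩ := hc
      have hni : ¬ IntegrableOn (fun r : ℝ => r⁻¹) (Set.Ioo 0 δ) := by
        intro h
        have heq : (fun x : ℝ => x ^ (-1 : ℝ)) = fun x : ℝ => x⁻¹ :=
          funext fun x => Real.rpow_neg_one x
        have h' : IntegrableOn (fun x : ℝ => x ^ (-1 : ℝ)) (Set.Ioo 0 δ) := by
          rw [heq]; exact h
        have := (intervalIntegral.integrableOn_Ioo_rpow_iff hδ).mp h'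
        norm_num at this
      refine aux_not_ev hmeas hint hε measurableSet_Ioo hni Set.Ioo_subset_Ioi_self ?_
      intro r hr
      exact hsub ⟨by simpa [Real.dist_eq, abs_of_pos hr.1] using hr.2, hr.1⟩
  · apply aux_liminf_zero
    · filter_upwards [Filter.eventually_gt_atTop 0] with r hr
      exact div_nonneg (hpos r hr) (le_of_lt hr)
    · intro ε hε
      by_contra hc
      rw [Filter.not_frequently] at hc
      simp only [not_lt] at hc
      obtain ⟨M, hM⟩ := Filter.eventually_atTop.mp hc
      set N := max M 1 with hN
      have hN0 : (0 : ℝ) < N := lt_of_lt_of_le one_pos (le_max_right _ _)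
      refine aux_not_ev hmeas hint hε measurableSet_Ioi not_IntegrableOn_Ioi_inv
        (Set.Ioi_subset_Ioi hN0.le) ?_
      intro r hr
      exact hM r (le_trans (le_max_left _ _) (le_of_lt hr))
end
end

section
/- Let μ' be a nonnegative, finite, atomless Borel measure on [0,∞) and let κ ∈ (0,1). Define f : (0,∞) → [0,∞] by f(x) = ∫_{(x,∞)} y^{−κ} dμ'(y). Then ∫₀^∞ f(x)^{1/κ} dx ≤ μ'([0,∞))^{1/κ}; in particular f ∈ L^{1/κ}((0,∞)). -/
open MeasureTheory Metric Filter

noncomputable section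

/-!
Write `A = ∫_S f^{1/κ}` for a set `S ⊆ (0,∞)`. Since `f^{1/κ} = f^{1/κ-1} · f`, Tonelli gives
`A = ∫ y^{-κ} (∫_{S ∩ (0,y)} f^{1/κ-1} dx) dμ'(y)`, and Hölder with exponents `1/(1-κ)` and `1/κ`
bounds the inner integral by `A^{1-κ} y^κ`. Hence `A ≤ A^{1-κ} μ'((0,∞))`, which gives
`A ≤ μ'((0,∞))^{1/κ}` as soon as `A` is finite. On `S = (ε, N)` with `ε > 0`, `f` is bounded and
`A` is finite; monotone convergence in `ε → 0`, `N → ∞` then yields the bound on `(0,∞)`.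
-/

open Set
open scoped ENNReal

theorem ENNReal.le_rpow_one_div_of_le_rpow_one_sub_mul {A M : ℝ≥0∞} {κ : ℝ} (hκ : 0 < κ)
    (hA : A ≠ ∞) (h : A ≤ A ^ (1 - κ) * M) : A ≤ M ^ (1 / κ) := by
  rcases eq_or_ne A 0 with rfl | hA0
  · exact zero_le
  have hAκ : A ^ κ ≤ M := by
    rwa [← ENNReal.mul_le_mul_iff_right (a := A ^ (1 - κ)) (by simp [hA0, hA])
      (by simp [hA0, hA]), ← ENNReal.rpow_add _ _ hA0 hA, sub_add_cancel, ENNReal.rpow_one]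
  calc A = (A ^ κ) ^ (1 / κ) := by rw [← ENNReal.rpow_mul, mul_one_div_cancel hκ.ne',
          ENNReal.rpow_one]
    _ ≤ M ^ (1 / κ) := by gcongr

theorem lintegral_rpow_one_div_sub_one_le {α : Type*} [MeasurableSpace α] (μ : Measure α)
    {f : α → ℝ≥0∞} (hf : AEMeasurable f μ) {κ : ℝ} (hκ0 : 0 < κ) (hκ1 : κ < 1) :
    ∫⁻ x, f x ^ (1 / κ - 1) ∂μ ≤ (∫⁻ x, f x ^ (1 / κ) ∂μ) ^ (1 - κ) * μ univ ^ κ := by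
  have hpq : Real.HolderConjugate (1 / (1 - κ)) (1 / κ) :=
    Real.holderConjugate_one_div (by linarith) hκ0 (by ring)
  have hexp : (1 / κ - 1) * (1 / (1 - κ)) = 1 / κ := by
    field_simp [(by linarith : (1 : ℝ) - κ ≠ 0)]
  have hHolder := ENNReal.lintegral_mul_le_Lp_mul_Lq μ hpq (hf.pow_const (1 / κ - 1))
    aemeasurable_const (g := fun _ => 1)
  simp only [Pi.mul_apply, mul_one, ← ENNReal.rpow_mul, hexp, one_div_one_div,
    ENNReal.one_rpow, lintegral_const, one_mul] at hHolder
  exact hHolder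

theorem monotone_Ioo_inv_add_one_add_one :
    Monotone fun n : ℕ => Ioo ((n + 1 : ℝ)⁻¹) (n + 1) := fun m n hmn =>
  Ioo_subset_Ioo (inv_anti₀ (by positivity) (by gcongr)) (by gcongr)

theorem iUnion_Ioo_inv_add_one_add_one : ⋃ n : ℕ, Ioo ((n + 1 : ℝ)⁻¹) (n + 1) = Ioi 0 := by
  refine Subset.antisymm (iUnion_subset fun n x hx => (inv_pos.mpr (by positivity)).trans hx.1)
    fun x (hx : 0 < x) => ?_
  obtain ⟨n, hn⟩ := exists_nat_gt (max x x⁻¹)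
  refine mem_iUnion.mpr ⟨n, ?_, ?_⟩
  · rw [inv_lt_comm₀ (by positivity) hx]
    linarith [le_max_right x x⁻¹]
  · linarith [le_max_left x x⁻¹]

theorem setLIntegral_mul_lintegral_Ioi_eq (μ ν : Measure ℝ) [SFinite μ] [SFinite ν]
    {g h : ℝ → ℝ≥0∞} (hg : Measurable g) (hh : Measurable h) {S : Set ℝ} :
    ∫⁻ x in S, h x * ∫⁻ y in Ioi x, g y ∂μ ∂ν = ∫⁻ y, g y * ∫⁻ x in S ∩ Iio y, h x ∂ν ∂μ := by
  set K : ℝ × ℝ → ℝ≥0∞ := fun p => h p.1 * {q : ℝ × ℝ | q.1 < q.2}.indicator (g ∘ Prod.snd) p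
  have hK : Measurable K := (hh.comp measurable_fst).mul
    ((hg.comp measurable_snd).indicator (measurableSet_lt measurable_fst measurable_snd))
  calc ∫⁻ x in S, h x * ∫⁻ y in Ioi x, g y ∂μ ∂ν
      = ∫⁻ x in S, ∫⁻ y, K (x, y) ∂μ ∂ν := by
        refine lintegral_congr fun x => ?_
        rw [← lintegral_indicator measurableSet_Ioi,
          ← lintegral_const_mul _ (hg.indicator measurableSet_Ioi)]
        rfl
    _ = ∫⁻ y, ∫⁻ x in S, K (x, y) ∂ν ∂μ := lintegral_lintegral_swap hK.aemeasurable
    _ = ∫⁻ y, g y * ∫⁻ x in S ∩ Iio y, h x ∂ν ∂μ := by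
        refine lintegral_congr fun y => ?_
        rw [inter_comm, ← Measure.restrict_restrict measurableSet_Iio,
          ← lintegral_indicator measurableSet_Iio,
          ← lintegral_const_mul _ (hh.indicator measurableSet_Iio)]
        refine lintegral_congr fun x => ?_
        by_cases hxy : x < y <;> simp [K, hxy, mul_comm]

theorem ofReal_rpow_neg_mul_setLIntegral_Iio_le {F : ℝ → ℝ≥0∞} (hF : Measurable F) {κ : ℝ}
    (hκ0 : 0 < κ) (hκ1 : κ < 1) {S : Set ℝ} (hS : S ⊆ Ioi 0) (y : ℝ) :
    ENNReal.ofReal (y ^ (-κ)) * ∫⁻ x in S ∩ Iio y, F x ^ (1 / κ - 1) ≤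
      (∫⁻ x in S, F x ^ (1 / κ)) ^ (1 - κ) * (Ioi 0).indicator 1 y := by
  by_cases hy : 0 < y
  swap
  · have hempty : S ∩ Iio y = ∅ :=
      eq_empty_of_forall_notMem fun x hx => hy ((hS hx.1).out.trans hx.2)
    simp [hempty]
  calc ENNReal.ofReal (y ^ (-κ)) * ∫⁻ x in S ∩ Iio y, F x ^ (1 / κ - 1)
      ≤ ENNReal.ofReal (y ^ (-κ)) * ((∫⁻ x in S ∩ Iio y, F x ^ (1 / κ)) ^ (1 - κ) *
          volume (S ∩ Iio y) ^ κ) := by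
        gcongr
        simpa using lintegral_rpow_one_div_sub_one_le (volume.restrict (S ∩ Iio y))
          hF.aemeasurable hκ0 hκ1
    _ ≤ ENNReal.ofReal (y ^ (-κ)) * ((∫⁻ x in S, F x ^ (1 / κ)) ^ (1 - κ) *
          volume (Ioo 0 y) ^ κ) := by
        gcongr
        · exact inter_subset_left
        · exact fun x hx => ⟨hS hx.1, hx.2⟩
    _ = (∫⁻ x in S, F x ^ (1 / κ)) ^ (1 - κ) * (Ioi 0).indicator 1 y := by
        rw [Real.volume_Ioo, sub_zero, ENNReal.ofReal_rpow_of_pos hy,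
          indicator_of_mem (mem_Ioi.mpr hy),
          Pi.one_apply, mul_one, mul_left_comm, ← ENNReal.ofReal_mul (by positivity),
          ← Real.rpow_add hy, neg_add_cancel, Real.rpow_zero, ENNReal.ofReal_one, mul_one]

def tailIntegral (μ' : Measure ℝ) (κ x : ℝ) : ℝ≥0∞ :=
  ∫⁻ y in Ioi x, ENNReal.ofReal (y ^ (-κ)) ∂μ'

section tailIntegral

variable (μ' : Measure ℝ) {κ : ℝ}

theorem antitone_tailIntegral : Antitone (tailIntegral μ' κ) :=
  fun _ _ hab => lintegral_mono_set (Ioi_subset_Ioi hab)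

theorem measurable_tailIntegral : Measurable (tailIntegral μ' κ) :=
  (antitone_tailIntegral μ').measurable

theorem tailIntegral_le (hκ : 0 ≤ κ) {ε x : ℝ} (hε : 0 < ε) (hx : ε ≤ x) :
    tailIntegral μ' κ x ≤ ENNReal.ofReal (ε ^ (-κ)) * μ' univ :=
  calc tailIntegral μ' κ x ≤ ∫⁻ _ in Ioi x, ENNReal.ofReal (ε ^ (-κ)) ∂μ' :=
        setLIntegral_mono measurable_const fun y hy => ENNReal.ofReal_le_ofReal
          (Real.rpow_le_rpow_of_nonpos hε (hx.trans (le_of_lt hy)) (neg_nonpos.mpr hκ))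
    _ ≤ ENNReal.ofReal (ε ^ (-κ)) * μ' univ := by
        rw [setLIntegral_const]; gcongr; exact subset_univ _

theorem setLIntegral_tailIntegral_rpow_eq [SFinite μ'] (hκ0 : 0 < κ) (hκ1 : κ ≤ 1) (S : Set ℝ) :
    ∫⁻ x in S, tailIntegral μ' κ x ^ (1 / κ) =
      ∫⁻ y, ENNReal.ofReal (y ^ (-κ)) *
        ∫⁻ x in S ∩ Iio y, tailIntegral μ' κ x ^ (1 / κ - 1) ∂volume ∂μ' := by
  have hsplit : ∀ x, tailIntegral μ' κ x ^ (1 / κ) =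
      tailIntegral μ' κ x ^ (1 / κ - 1) * tailIntegral μ' κ x := fun x => by
    conv_lhs => rw [← sub_add_cancel (1 / κ) 1]
    rw [ENNReal.rpow_add_of_nonneg _ _ (by rw [sub_nonneg, le_div_iff₀ hκ0]; linarith)
      zero_le_one, ENNReal.rpow_one]
  simp_rw [hsplit]
  exact setLIntegral_mul_lintegral_Ioi_eq μ' volume (g := fun y => ENNReal.ofReal (y ^ (-κ)))
    (h := fun x => tailIntegral μ' κ x ^ (1 / κ - 1)) (by fun_prop)
    ((measurable_tailIntegral μ').pow_const _)

theorem setLIntegral_tailIntegral_rpow_le_rpow_one_sub_mul [SFinite μ'] (hκ0 : 0 < κ)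
    (hκ1 : κ < 1) {S : Set ℝ} (hS : S ⊆ Ioi 0) :
    ∫⁻ x in S, tailIntegral μ' κ x ^ (1 / κ) ≤
      (∫⁻ x in S, tailIntegral μ' κ x ^ (1 / κ)) ^ (1 - κ) * μ' (Ioi 0) :=
  calc ∫⁻ x in S, tailIntegral μ' κ x ^ (1 / κ)
      = ∫⁻ y, ENNReal.ofReal (y ^ (-κ)) *
          ∫⁻ x in S ∩ Iio y, tailIntegral μ' κ x ^ (1 / κ - 1) ∂volume ∂μ' :=
        setLIntegral_tailIntegral_rpow_eq μ' hκ0 hκ1.le S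
    _ ≤ ∫⁻ y, (∫⁻ x in S, tailIntegral μ' κ x ^ (1 / κ)) ^ (1 - κ) * (Ioi 0).indicator 1 y ∂μ' :=
        lintegral_mono fun y => ofReal_rpow_neg_mul_setLIntegral_Iio_le
          (measurable_tailIntegral μ') hκ0 hκ1 hS y
    _ = (∫⁻ x in S, tailIntegral μ' κ x ^ (1 / κ)) ^ (1 - κ) * μ' (Ioi 0) := by
        rw [lintegral_const_mul _ (measurable_one.indicator measurableSet_Ioi),
          lintegral_indicator_one measurableSet_Ioi]

theorem setLIntegral_Ioo_tailIntegral_rpow_ne_top [IsFiniteMeasure μ'] (hκ : 0 < κ) {ε : ℝ}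
    (hε : 0 < ε) (N : ℝ) : ∫⁻ x in Ioo ε N, tailIntegral μ' κ x ^ (1 / κ) ≠ ∞ := by
  refine ne_top_of_le_ne_top ?_ (setLIntegral_mono measurable_const fun x hx =>
    ENNReal.rpow_le_rpow (tailIntegral_le μ' hκ.le hε hx.1.le) (one_div_pos.mpr hκ).le)
  rw [setLIntegral_const, Real.volume_Ioo]
  exact ENNReal.mul_ne_top (ENNReal.rpow_ne_top_of_nonneg (one_div_pos.mpr hκ).le
    (ENNReal.mul_ne_top ENNReal.ofReal_ne_top (measure_ne_top _ _))) ENNReal.ofReal_ne_top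

theorem setLIntegral_Ioi_zero_tailIntegral_rpow_le [IsFiniteMeasure μ'] (hκ0 : 0 < κ)
    (hκ1 : κ < 1) :
    ∫⁻ x in Ioi 0, tailIntegral μ' κ x ^ (1 / κ) ≤ μ' (Ioi 0) ^ (1 / κ) := by
  conv_lhs => rw [← iUnion_Ioo_inv_add_one_add_one,
    setLIntegral_iUnion_of_directed _ monotone_Ioo_inv_add_one_add_one.directed_le]
  refine iSup_le fun n => ENNReal.le_rpow_one_div_of_le_rpow_one_sub_mul hκ0
    (setLIntegral_Ioo_tailIntegral_rpow_ne_top μ' hκ0 (by positivity) _)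
    (setLIntegral_tailIntegral_rpow_le_rpow_one_sub_mul μ' hκ0 hκ1 fun x hx => ?_)
  exact (inv_pos.mpr (by positivity)).trans hx.1

end tailIntegral

theorem stmt18_general (μ' : Measure ℝ) [IsFiniteMeasure μ'] (κ : ℝ) (hκ0 : 0 < κ) (hκ1 : κ < 1) :
    (∫⁻ x in Set.Ioi (0 : ℝ),
        (∫⁻ y in Set.Ioi x, ENNReal.ofReal (y ^ (-κ)) ∂μ') ^ ((1:ℝ)/κ))
      ≤ (μ' (Set.Ici (0 : ℝ))) ^ ((1:ℝ)/κ)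
    ∧ (∫⁻ x in Set.Ioi (0 : ℝ),
        (∫⁻ y in Set.Ioi x, ENNReal.ofReal (y ^ (-κ)) ∂μ') ^ ((1:ℝ)/κ)) ≠ ⊤ := by
  have hbound : ∫⁻ x in Ioi 0, tailIntegral μ' κ x ^ (1 / κ) ≤ μ' (Ici 0) ^ (1 / κ) :=
    (setLIntegral_Ioi_zero_tailIntegral_rpow_le μ' hκ0 hκ1).trans
      (ENNReal.rpow_le_rpow (measure_mono Ioi_subset_Ici_self) (one_div_pos.mpr hκ0).le)
  exact ⟨hbound, ne_top_of_le_ne_top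
    (ENNReal.rpow_ne_top_of_nonneg (one_div_pos.mpr hκ0).le (measure_ne_top _ _)) hbound⟩

/-- for a finite atomless Borel measure μ' on [0,∞) and 0 < κ < 1, the
function f(x) = ∫_{(x,∞)} y^{−κ} dμ'(y) satisfies ‖f‖_{L^{1/κ}} ≤ μ'([0,∞)); in particular
f ∈ L^{1/κ}((0,∞)). -/
theorem stmt18 (μ' : Measure ℝ) [IsFiniteMeasure μ'] [NullSingletonClass μ']
    (hsupp : μ' (Set.Iio (0 : ℝ)) = 0) (κ : ℝ) (hκ0 : 0 < κ) (hκ1 : κ < 1) :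
    (∫⁻ x in Set.Ioi (0 : ℝ),
        (∫⁻ y in Set.Ioi x, ENNReal.ofReal (y ^ (-κ)) ∂μ') ^ ((1:ℝ)/κ))
      ≤ (μ' (Set.Ici (0 : ℝ))) ^ ((1:ℝ)/κ)
    ∧ (∫⁻ x in Set.Ioi (0 : ℝ),
        (∫⁻ y in Set.Ioi x, ENNReal.ofReal (y ^ (-κ)) ∂μ') ^ ((1:ℝ)/κ)) ≠ ⊤ :=
  stmt18_general μ' κ hκ0 hκ1
end
end
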